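/- arXiv:0710.5800 — 2 statements merged into one kernel-verified Lean document; each statement's English description precedes it below -/
import Mathlib

section
/- Let A be a C*-algebra, I a closed two-sided ideal of A, and M a right Hilbert C*-module over A. Then the closed submodule MI (the closed linear span of elements m·i with m ∈ M, i ∈ I) equals the set of all vectors z ∈ M such that ⟨z, z⟩ ∈ I. -/
/- ## A framework for Hilbert C*-modules over a (possibly non-unital) C*-algebra,
   their adjointable operators, compact operators, Cuntz comparison, ideal
   submodules, quotient modules, direct sums, and standard modules `l₂(I)`. -/

noncomputable section

/-- A (right) Hilbert C*-module over the C*-algebra `A`, bundled with its carrier type.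
The norm is determined by the `A`-valued inner product, and completeness is stated via
Cauchy sequences for that norm. -/
structure HilbertModule (A : Type) [NonUnitalCStarAlgebra A] where
  carrier : Type
  [instAdd : AddCommGroup carrier]
  [instMod : Module ℂ carrier]
  smul : carrier → A → carrier
  inner : carrier → carrier → A
  smul_add : ∀ x y a, smul (x + y) a = smul x a + smul y a
  add_smul' : ∀ x a b, smul x (a + b) = smul x a + smul x b
  smul_mul : ∀ x a b, smul x (a * b) = smul (smul x a) b
  smulC_smul : ∀ (c : ℂ) x a, smul (c • x) a = c • smul x a
  smul_smulC : ∀ (c : ℂ) x a, smul x (c • a) = c • smul x a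
  inner_add_left : ∀ x y z, inner (x + y) z = inner x z + inner y z
  inner_smul_right : ∀ x y a, inner x (smul y a) = inner x y * a
  inner_smulC_right : ∀ (c : ℂ) x y, inner x (c • y) = c • inner x y
  inner_star : ∀ x y, star (inner x y) = inner y x
  inner_self_pos : ∀ x, ∃ b, inner x x = star b * b
  inner_self_definite : ∀ x, inner x x = 0 → x = 0
  complete : ∀ u : ℕ → carrier,
    (∀ ε : ℝ, 0 < ε → ∃ N, ∀ m n, N ≤ m → N ≤ n →
      ‖inner (u m - u n) (u m - u n)‖ < ε) →
    ∃ x, ∀ ε : ℝ, 0 < ε → ∃ N, ∀ n, N ≤ n → ‖inner (u n - x) (u n - x)‖ < ε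

attribute [instance] HilbertModule.instAdd HilbertModule.instMod

namespace HilbertModule

variable {A B : Type} [NonUnitalCStarAlgebra A] [NonUnitalCStarAlgebra B]

/-- The norm on a Hilbert C*-module: `‖x‖ = ‖⟨x,x⟩‖^(1/2)`. -/
def hnorm (M : HilbertModule A) (x : M.carrier) : ℝ := Real.sqrt ‖M.inner x x‖

/-- A (not necessarily closed) submodule of a Hilbert C*-module, as a subset. -/
def IsSubmodule (M : HilbertModule A) (F : Set M.carrier) : Prop :=
  (0 : M.carrier) ∈ F ∧ (∀ x y, x ∈ F → y ∈ F → x + y ∈ F) ∧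
    (∀ x a, x ∈ F → M.smul x a ∈ F) ∧ (∀ (c : ℂ) x, x ∈ F → c • x ∈ F)

/-- `x` belongs to the closure of the subset `S` of the Hilbert module `M`. -/
def MemClosure (M : HilbertModule A) (S : Set M.carrier) (x : M.carrier) : Prop :=
  ∀ ε : ℝ, 0 < ε → ∃ y ∈ S, M.hnorm (x - y) < ε

/-- Closed submodules of a Hilbert C*-module. -/
def IsClosedSubmodule (M : HilbertModule A) (F : Set M.carrier) : Prop :=
  M.IsSubmodule F ∧ ∀ x, M.MemClosure F x → x ∈ F

end HilbertModule

/-- An adjointable operator between Hilbert C*-modules: `⟨T x, y⟩ = ⟨x, T* y⟩`.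
(Such maps are automatically bounded `A`-module maps.) -/
structure Adjointable {A : Type} [NonUnitalCStarAlgebra A]
    (M N : HilbertModule A) where
  toFun : M.carrier → N.carrier
  adjFun : N.carrier → M.carrier
  inner_adj : ∀ x y, N.inner (toFun x) y = M.inner x (adjFun y)

namespace HilbertModule

variable {A B : Type} [NonUnitalCStarAlgebra A] [NonUnitalCStarAlgebra B]

/-- Finite rank operators: finite sums of the operators `θ_{u,v} : x ↦ v⟨u,x⟩`. -/
def IsFiniteRank {M N : HilbertModule A} (T : Adjointable M N) : Prop :=
  ∃ (n : ℕ) (u : Fin n → M.carrier) (v : Fin n → N.carrier),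
    ∀ x, T.toFun x = ∑ i, N.smul (v i) (M.inner (u i) x)

/-- Compact operators: norm limits of finite rank operators. -/
def IsCompactOp {M N : HilbertModule A} (T : Adjointable M N) : Prop :=
  ∀ ε : ℝ, 0 < ε → ∃ S : Adjointable M N, IsFiniteRank S ∧
    ∀ x, N.hnorm (T.toFun x - S.toFun x) ≤ ε * M.hnorm x

/-- Positive operators on a Hilbert C*-module: those of the form `S* S`. -/
def IsPositiveOp {M : HilbertModule A} (T : Adjointable M M) : Prop :=
  ∃ S : Adjointable M M, ∀ x, T.toFun x = S.adjFun (S.toFun x)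

/-- `F ⊂⊂ M`: the closed submodule `F` is compactly contained in `M`, i.e. some
positive compact operator on `M` restricts to the identity on `F`. -/
def CompactlyContained (M : HilbertModule A) (F : Set M.carrier) : Prop :=
  M.IsClosedSubmodule F ∧ ∃ T : Adjointable M M,
    IsCompactOp T ∧ IsPositiveOp T ∧ ∀ x ∈ F, T.toFun x = x

/-- The submodule `F` of `M` is isomorphic, as a Hilbert C*-module, to the
submodule `F'` of `N`. -/
def SubIso (M : HilbertModule A) (F : Set M.carrier)
    (N : HilbertModule A) (F' : Set N.carrier) : Prop :=
  ∃ f : M.carrier → N.carrier, Set.BijOn f F F' ∧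
    (∀ x ∈ F, ∀ y ∈ F, f (x + y) = f x + f y) ∧
    (∀ x ∈ F, ∀ a, f (M.smul x a) = N.smul (f x) a) ∧
    (∀ x ∈ F, ∀ y ∈ F, N.inner (f x) (f y) = M.inner x y)

/-- Cuntz subequivalence of Hilbert C*-modules: every compactly contained submodule
of `M` is isomorphic to a compactly contained submodule of `N`. -/
def CuntzLE (M N : HilbertModule A) : Prop :=
  ∀ F, M.CompactlyContained F → ∃ F', N.CompactlyContained F' ∧ SubIso M F N F'

/-- Cuntz equivalence of Hilbert C*-modules. -/
def CuntzEq (M N : HilbertModule A) : Prop := CuntzLE M N ∧ CuntzLE N M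

/-- A Hilbert C*-module is countably generated if some sequence generates it as a
closed submodule. -/
def CountablyGenerated (M : HilbertModule A) : Prop :=
  ∃ v : ℕ → M.carrier, ∀ F, M.IsClosedSubmodule F → (∀ n, v n ∈ F) → F = Set.univ

/-- A closed two-sided ideal is σ-unital iff it contains a strictly positive element. -/
def SigmaUnital (I : TwoSidedIdeal A) : Prop :=
  ∃ h : A, h ∈ I ∧ (∃ b, h = star b * b) ∧
    ∀ x ∈ I, ∀ ε : ℝ, 0 < ε → ∃ a : A, ‖x - h * a‖ < ε

/-- The ideal submodule `MI = {z ∈ M | ⟨z,z⟩ ∈ I}`. -/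
def idealSet (M : HilbertModule A) (I : TwoSidedIdeal A) : Set M.carrier :=
  {z | M.inner z z ∈ I}

/-- The closed linear span of `{m · i : m ∈ M, i ∈ I}` in `M`. -/
def idealSpanClosure (M : HilbertModule A) (I : TwoSidedIdeal A) : Set M.carrier :=
  {x | M.MemClosure
    (↑(Submodule.span ℂ {z : M.carrier | ∃ m, ∃ a ∈ I, z = M.smul m a})) x}

/-- A Hilbert `A`-module all of whose inner products lie in the ideal `I`; these are
precisely (the `A`-module versions of) the Hilbert C*-modules over `I`. -/
def IsIModule (M : HilbertModule A) (I : TwoSidedIdeal A) : Prop :=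
  ∀ x, M.inner x x ∈ I

end HilbertModule

open HilbertModule

/-- A concrete realization of the ideal submodule `MI` as a Hilbert C*-module in its
own right, via an inner-product preserving embedding onto `{z | ⟨z,z⟩ ∈ I}`. -/
structure IdealRep {A : Type} [NonUnitalCStarAlgebra A]
    (M : HilbertModule A) (I : TwoSidedIdeal A) where
  modl : HilbertModule A
  emb : modl.carrier → M.carrier
  emb_add : ∀ x y, emb (x + y) = emb x + emb y
  emb_smul : ∀ x a, emb (modl.smul x a) = M.smul (emb x) a
  emb_smulC : ∀ (c : ℂ) x, emb (c • x) = c • emb x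
  emb_inner : ∀ x y, M.inner (emb x) (emb y) = modl.inner x y
  emb_range : Set.range emb = idealSet M I

/-- A surjective *-homomorphism `π : A → B` with kernel `I`; this realizes `B` as the
quotient C*-algebra `A/I`. -/
structure QuotientHom (A B : Type) [NonUnitalCStarAlgebra A] [NonUnitalCStarAlgebra B]
    (I : TwoSidedIdeal A) where
  π : A → B
  map_add : ∀ a b, π (a + b) = π a + π b
  map_mul : ∀ a b, π (a * b) = π a * π b
  map_star : ∀ a, π (star a) = star (π a)
  map_smulC : ∀ (c : ℂ) a, π (c • a) = c • π a
  surj : Function.Surjective π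
  ker : ∀ a, π a = 0 ↔ a ∈ I

/-- A realization of the quotient module `M/MI` as a Hilbert C*-module over `B ≅ A/I`. -/
structure QuotientRep {A B : Type} [NonUnitalCStarAlgebra A] [NonUnitalCStarAlgebra B]
    {I : TwoSidedIdeal A} (q : QuotientHom A B I)
    (M : HilbertModule A) where
  modl : HilbertModule B
  p : M.carrier → modl.carrier
  p_surj : Function.Surjective p
  p_add : ∀ x y, p (x + y) = p x + p y
  p_smulC : ∀ (c : ℂ) x, p (c • x) = c • p x
  p_smul : ∀ x a, p (M.smul x a) = modl.smul (p x) (q.π a)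
  p_inner : ∀ x y, modl.inner (p x) (p y) = q.π (M.inner x y)
  p_ker : ∀ x, p x = 0 ↔ M.inner x x ∈ I

/-- A realization of the direct sum `M ⊕ N` of Hilbert C*-modules. -/
structure DirectSumRep {A : Type} [NonUnitalCStarAlgebra A]
    (M N : HilbertModule A) where
  modl : HilbertModule A
  i₁ : M.carrier → modl.carrier
  i₂ : N.carrier → modl.carrier
  p₁ : modl.carrier → M.carrier
  p₂ : modl.carrier → N.carrier
  i₁_add : ∀ x y, i₁ (x + y) = i₁ x + i₁ y
  i₂_add : ∀ x y, i₂ (x + y) = i₂ x + i₂ y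
  i₁_smul : ∀ x a, i₁ (M.smul x a) = modl.smul (i₁ x) a
  i₂_smul : ∀ x a, i₂ (N.smul x a) = modl.smul (i₂ x) a
  i₁_smulC : ∀ (c : ℂ) x, i₁ (c • x) = c • i₁ x
  i₂_smulC : ∀ (c : ℂ) x, i₂ (c • x) = c • i₂ x
  inner_i₁ : ∀ x y, modl.inner (i₁ x) (i₁ y) = M.inner x y
  inner_i₂ : ∀ x y, modl.inner (i₂ x) (i₂ y) = N.inner x y
  inner_mixed : ∀ x y, modl.inner (i₁ x) (i₂ y) = 0
  decomp : ∀ s, i₁ (p₁ s) + i₂ (p₂ s) = s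
  p₁_i₁ : ∀ x, p₁ (i₁ x) = x
  p₁_i₂ : ∀ y, p₁ (i₂ y) = 0
  p₂_i₁ : ∀ x, p₂ (i₁ x) = 0
  p₂_i₂ : ∀ y, p₂ (i₂ y) = y

/-- A realization of the standard Hilbert C*-module `l₂(I)` over the ideal `I`,
viewed as a Hilbert `A`-module, via its coordinate maps. -/
structure L2Rep {A : Type} [NonUnitalCStarAlgebra A] (I : TwoSidedIdeal A) where
  modl : HilbertModule A
  seq : modl.carrier → ℕ → A
  seq_mem : ∀ x n, seq x n ∈ I
  seq_add : ∀ x y n, seq (x + y) n = seq x n + seq y n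
  seq_smul : ∀ x a n, seq (modl.smul x a) n = seq x n * a
  seq_smulC : ∀ (c : ℂ) x n, seq (c • x) n = c • seq x n
  seq_inner : ∀ x y, Filter.Tendsto
    (fun N => ∑ n ∈ Finset.range N, star (seq x n) * seq y n)
    Filter.atTop (nhds (modl.inner x y))
  seq_surj : ∀ f : ℕ → A, (∀ n, f n ∈ I) →
    (∃ L, Filter.Tendsto (fun N => ∑ n ∈ Finset.range N, star (f n) * f n)
      Filter.atTop (nhds L)) →
    ∃ x, seq x = f

/-- An isomorphism (unitary) of Hilbert C*-modules. -/
structure HIso {A : Type} [NonUnitalCStarAlgebra A] (M N : HilbertModule A) where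
  toFun : M.carrier → N.carrier
  bij : Function.Bijective toFun
  map_add : ∀ x y, toFun (x + y) = toFun x + toFun y
  map_smul : ∀ x a, toFun (M.smul x a) = N.smul (toFun x) a
  map_smulC : ∀ (c : ℂ) x, toFun (c • x) = c • toFun x
  map_inner : ∀ x y, N.inner (toFun x) (toFun y) = M.inner x y

end

noncomputable section

/-- The zero Hilbert C*-module. -/
def HilbertModule.zeroModule (A : Type) [NonUnitalCStarAlgebra A] : HilbertModule A where
  carrier := PUnit
  smul _ _ := PUnit.unit
  inner _ _ := 0
  smul_add := by intros; rfl
  add_smul' := by intros; rfl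
  smul_mul := by intros; rfl
  smulC_smul := by intros; exact (Subsingleton.elim _ _)
  smul_smulC := by intros; exact (Subsingleton.elim _ _)
  inner_add_left := by intros; simp
  inner_smul_right := by intros; simp
  inner_smulC_right := by intros; simp
  inner_star := by intros; simp
  inner_self_pos := fun _ => ⟨0, by simp⟩
  inner_self_definite := fun x _ => Subsingleton.elim _ _
  complete := fun u _ => ⟨PUnit.unit, fun ε hε => ⟨0, fun n _ => by simpa using hε⟩⟩

end

/-!
Every vector of the span lies in `{w | ∀ x, ⟨x, w⟩ ∈ I}`; since a closed ideal is self-adjoint,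
expanding `⟨z - w, z - w⟩` shows that `⟨z, z⟩` is a norm limit of elements of `I` when `z` is a
limit of such `w`. Conversely, if `h = ⟨z, z⟩ ∈ I`, the functional calculus gives `u = f(h) ∈ I`
with `f(t) = t² / (t² + ε²)`, and `⟨z - z·u, z - z·u⟩ = (1 - u) h (1 - u) = g(h)` for
`g(t) = t (1 - f(t))²`, which is uniformly at most `ε / 2`; so `z` is a limit of the vectors `z·u`.
-/

/-- `(1 - u) h (1 - u)`, expanded so that no unit is needed. -/
def oneSubSandwich {R : Type*} [NonUnitalRing R] (u h : R) : R :=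
  h - h * u - u * h + u * h * u

lemma abs_mul_div_sq_add_sq_sq_le {ε : ℝ} (hε : 0 < ε) (t : ℝ) :
    |t * (ε ^ 2 / (t ^ 2 + ε ^ 2)) ^ 2| ≤ ε / 2 := by
  have amgm : 2 * |t| * ε ≤ t ^ 2 + ε ^ 2 := by nlinarith [sq_nonneg (|t| - ε), sq_abs t]
  rw [abs_mul, abs_sq, div_pow, ← mul_div_assoc, div_le_iff₀ (by positivity)]
  nlinarith [mul_le_mul_of_nonneg_right amgm (by positivity : (0 : ℝ) ≤ ε ^ 3),
    mul_le_mul_of_nonneg_left (by nlinarith : ε ^ 2 ≤ t ^ 2 + ε ^ 2)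
      (by positivity : (0 : ℝ) ≤ ε * (t ^ 2 + ε ^ 2))]

section CStarAlgebra

variable {A : Type*} [NonUnitalCStarAlgebra A]

lemma oneSubSandwich_cfcₙ {f : ℝ → ℝ} (hf : Continuous f) (hf0 : f 0 = 0) {h : A}
    (hh : IsSelfAdjoint h) :
    oneSubSandwich (cfcₙ f h) h = cfcₙ (fun t => t * (1 - f t) ^ 2) h := by
  have expand : cfcₙ (fun t => t * (1 - f t) ^ 2) h
      = cfcₙ (fun t => t - t * f t - f t * t + f t * t * f t) h :=
    cfcₙ_congr fun t _ => by ring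
  rw [expand, cfcₙ_add .., cfcₙ_sub .., cfcₙ_sub .., cfcₙ_mul .., cfcₙ_mul .., cfcₙ_mul ..,
    cfcₙ_mul (fun t => f t) .., cfcₙ_id' ℝ h]
  rfl

lemma IsSelfAdjoint.exists_norm_oneSubSandwich_lt {h : A} (hh : IsSelfAdjoint h) {ε : ℝ}
    (hε : 0 < ε) : ∃ w, IsSelfAdjoint (h * w) ∧ ‖oneSubSandwich (h * w) h‖ < ε := by
  have hpos : ∀ t : ℝ, t ^ 2 + ε ^ 2 ≠ 0 := fun t => by positivity
  set k : ℝ → ℝ := fun t => t / (t ^ 2 + ε ^ 2)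
  have hu : h * cfcₙ k h = cfcₙ (fun t => t * k t) h := by
    rw [cfcₙ_mul (fun t => t) k h, cfcₙ_id' ℝ h]
  refine ⟨cfcₙ k h, hu ▸ cfcₙ_predicate _ h, ?_⟩
  rw [hu, oneSubSandwich_cfcₙ (by fun_prop) (by simp [k]) hh]
  refine (norm_cfcₙ_le fun t _ => ?_).trans_lt (half_lt_self hε)
  have hfactor : 1 - t * k t = ε ^ 2 / (t ^ 2 + ε ^ 2) := by
    rw [mul_div_assoc', ← sq, one_sub_div (hpos t), add_sub_cancel_left]
  rw [Real.norm_eq_abs, hfactor]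
  exact abs_mul_div_sq_add_sq_sq_le hε t

lemma TwoSidedIdeal.exists_mem_norm_oneSubSandwich_lt {I : TwoSidedIdeal A} {h : A} (hhI : h ∈ I)
    (hh : IsSelfAdjoint h) {ε : ℝ} (hε : 0 < ε) :
    ∃ u ∈ I, IsSelfAdjoint u ∧ ‖oneSubSandwich u h‖ < ε := by
  obtain ⟨w, hu, hlt⟩ := hh.exists_norm_oneSubSandwich_lt hε
  exact ⟨h * w, I.mul_mem_right _ _ hhI, hu, hlt⟩

lemma TwoSidedIdeal.star_mem_of_isClosed {I : TwoSidedIdeal A} (hI : IsClosed (I : Set A))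
    {a : A} (ha : a ∈ I) : star a ∈ I := by
  rw [← SetLike.mem_coe, ← hI.closure_eq, Metric.mem_closure_iff]
  intro ε hε
  obtain ⟨u, huI, hu, hlt⟩ := I.exists_mem_norm_oneSubSandwich_lt
    (I.mul_mem_left (star a) a ha) (.star_mul_self a) (pow_pos hε 2)
  refine ⟨u * star a, I.mul_mem_right _ _ huI, ?_⟩
  have cstar : ‖star a - u * star a‖ ^ 2 = ‖oneSubSandwich u (star a * a)‖ := by
    rw [sq, ← CStarRing.norm_self_mul_star]
    congr 1
    simp only [oneSubSandwich, star_sub, star_mul, star_star, hu.star_eq]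
    noncomm_ring
  rw [dist_eq_norm]
  exact lt_of_pow_lt_pow_left₀ 2 hε.le (cstar ▸ hlt)

end CStarAlgebra

namespace HilbertModule

variable {A : Type} [NonUnitalCStarAlgebra A] (M : HilbertModule A)

lemma inner_zero_right (x : M.carrier) : M.inner x 0 = 0 := by
  simpa using M.inner_smulC_right 0 x 0

lemma inner_add_right (x y z : M.carrier) : M.inner x (y + z) = M.inner x y + M.inner x z := by
  rw [← M.inner_star, M.inner_add_left, star_add, M.inner_star, M.inner_star]

lemma inner_smulC_left (c : ℂ) (x y : M.carrier) :
    M.inner (c • x) y = star c • M.inner x y := by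
  rw [← M.inner_star, M.inner_smulC_right, star_smul, M.inner_star]

lemma inner_smul_left (x y : M.carrier) (a : A) :
    M.inner (M.smul x a) y = star a * M.inner x y := by
  rw [← M.inner_star, M.inner_smul_right, star_mul, M.inner_star]

lemma inner_sub_left (x y z : M.carrier) : M.inner (x - y) z = M.inner x z - M.inner y z := by
  rw [eq_sub_iff_add_eq, ← M.inner_add_left, sub_add_cancel]

lemma inner_sub_right (x y z : M.carrier) : M.inner x (y - z) = M.inner x y - M.inner x z := by
  rw [eq_sub_iff_add_eq, ← M.inner_add_right, sub_add_cancel]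

lemma inner_sub_sub_self (z w : M.carrier) :
    M.inner (z - w) (z - w) = M.inner z z - M.inner z w - M.inner w z + M.inner w w := by
  rw [M.inner_sub_left, M.inner_sub_right, M.inner_sub_right]
  abel

lemma inner_sub_smul_sub_smul_self (z : M.carrier) {u : A} (hu : IsSelfAdjoint u) :
    M.inner (z - M.smul z u) (z - M.smul z u) = oneSubSandwich u (M.inner z z) := by
  rw [inner_sub_sub_self, M.inner_smul_right, inner_smul_left, inner_smul_left,
    M.inner_smul_right, hu.star_eq, oneSubSandwich, mul_assoc]

lemma hnorm_lt_iff (x : M.carrier) {ε : ℝ} (hε : 0 < ε) :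
    M.hnorm x < ε ↔ ‖M.inner x x‖ < ε ^ 2 :=
  Real.sqrt_lt' hε

def innerMemSubmodule (I : TwoSidedIdeal A) : Submodule ℂ M.carrier where
  carrier := {w | ∀ x, M.inner x w ∈ I}
  zero_mem' x := by simpa only [inner_zero_right] using I.zero_mem
  add_mem' hv hw x := by simpa only [inner_add_right] using I.add_mem (hv x) (hw x)
  smul_mem' c w hw x := by
    -- `I` need not be a `ℂ`-subspace a priori, so the scalar is moved to the left slot.
    simpa only [inner_smulC_left, M.inner_smulC_right, star_star] using hw (star c • x)

lemma span_le_innerMemSubmodule (I : TwoSidedIdeal A) :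
    Submodule.span ℂ {z | ∃ m, ∃ a ∈ I, z = M.smul m a} ≤ M.innerMemSubmodule I := by
  rw [Submodule.span_le]
  rintro _ ⟨m, a, ha, rfl⟩ x
  rw [M.inner_smul_right]
  exact I.mul_mem_left _ _ ha

lemma idealSpanClosure_subset_idealSet {I : TwoSidedIdeal A} (hI : IsClosed (I : Set A)) :
    idealSpanClosure M I ⊆ idealSet M I := by
  intro z hz
  change M.inner z z ∈ I
  rw [← SetLike.mem_coe, ← hI.closure_eq, Metric.mem_closure_iff]
  intro ε hε
  obtain ⟨w, hw, hzw⟩ := hz √ε (Real.sqrt_pos.mpr hε)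
  have hwI : ∀ x, M.inner x w ∈ I := M.span_le_innerMemSubmodule I hw
  have hwzI : M.inner w z ∈ I := M.inner_star z w ▸ I.star_mem_of_isClosed hI (hwI z)
  refine ⟨M.inner z w + M.inner w z - M.inner w w,
    I.sub_mem (I.add_mem (hwI z) hwzI) (hwI w), ?_⟩
  have expand : M.inner z z - (M.inner z w + M.inner w z - M.inner w w)
      = M.inner (z - w) (z - w) := by
    rw [inner_sub_sub_self]
    abel
  rw [dist_eq_norm, expand, ← Real.sq_sqrt hε.le]
  exact (M.hnorm_lt_iff _ (Real.sqrt_pos.mpr hε)).mp hzw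

lemma idealSet_subset_idealSpanClosure (I : TwoSidedIdeal A) :
    idealSet M I ⊆ idealSpanClosure M I := by
  intro z hz ε hε
  obtain ⟨u, huI, hu, hlt⟩ :=
    I.exists_mem_norm_oneSubSandwich_lt hz (M.inner_star z z) (pow_pos hε 2)
  refine ⟨M.smul z u, Submodule.subset_span ⟨z, u, huI, rfl⟩, ?_⟩
  rw [hnorm_lt_iff _ _ hε, inner_sub_smul_sub_smul_self _ _ hu]
  exact hlt

end HilbertModule

open HilbertModule in
/-- For a Hilbert C*-module `M` over `A` and a closed two-sided ideal
`I ⊆ A`, the closed linear span `MI` of `{m · i : m ∈ M, i ∈ I}` equals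
`{z ∈ M : ⟨z, z⟩ ∈ I}`. -/
theorem idealSpanClosure_eq_idealSet
    {A : Type} [NonUnitalCStarAlgebra A] (I : TwoSidedIdeal A)
    (hI : IsClosed (I : Set A)) (M : HilbertModule A) :
    idealSpanClosure M I = idealSet M I :=
  (idealSpanClosure_subset_idealSet M hI).antisymm (idealSet_subset_idealSpanClosure M I)
end

section
/- Let A be a σ-unital C*-algebra and I a σ-unital closed two-sided ideal of A. The following are equivalent: (i) I is a direct summand of A as a right Hilbert A-module; (ii) there is a projection P_I in the multiplier algebra M(A) with P_I·A ⊆ I such that the restriction of P_I to I is Murray–von Neumann equivalent to the unit of M(I). Moreover any two projections satisfying (ii) are Murray–von Neumann equivalent in M(A). -/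
/- ## Multiplier algebras, abstractly characterized. -/

noncomputable section

/-- An abstract characterization of the multiplier algebra `M(A)` of `A`: a unital
C*-algebra `MA` containing `A` as an essential two-sided ideal, such that every
double centralizer of `A` is realized by an element of `MA`. -/
structure MultAlgebraOf (A : Type) [NonUnitalCStarAlgebra A]
    (MA : Type) [CStarAlgebra MA] where
  ι : A → MA
  ι_add : ∀ a b, ι (a + b) = ι a + ι b
  ι_mul : ∀ a b, ι (a * b) = ι a * ι b
  ι_star : ∀ a, ι (star a) = star (ι a)
  ι_smulC : ∀ (c : ℂ) a, ι (c • a) = c • ι a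
  ι_inj : Function.Injective ι
  ideal_l : ∀ (m : MA) (a : A), ∃ b, m * ι a = ι b
  ideal_r : ∀ (m : MA) (a : A), ∃ b, ι a * m = ι b
  essential : ∀ m : MA, (∀ a, m * ι a = 0) → m = 0
  represents : ∀ L R : A → A,
    (∀ a b, L (a * b) = L a * b) → (∀ a b, R (a * b) = a * R b) →
    (∀ a b, ι a * ι (L b) = ι (R a) * ι b) →
    ∃ m : MA, (∀ a, m * ι a = ι (L a)) ∧ (∀ a, ι a * m = ι (R a))

variable {A B MA MB : Type}
variable [NonUnitalCStarAlgebra A] [NonUnitalCStarAlgebra B]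
variable [CStarAlgebra MA] [CStarAlgebra MB]

/-- A C*-algebra is σ-unital iff it contains a strictly positive element. -/
def SigmaUnitalAlg (A : Type) [NonUnitalCStarAlgebra A] : Prop :=
  ∃ h : A, (∃ b, h = star b * b) ∧
    ∀ x : A, ∀ ε : ℝ, 0 < ε → ∃ a : A, ‖x - h * a‖ < ε

/-- A closed two-sided ideal is σ-unital iff it contains a strictly positive element. -/
def SigmaUnitalIdeal (I : TwoSidedIdeal A) : Prop :=
  ∃ h : A, h ∈ I ∧ (∃ b, h = star b * b) ∧
    ∀ x ∈ I, ∀ ε : ℝ, 0 < ε → ∃ a : A, ‖x - h * a‖ < ε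

/-- Stability of the ideal `I` (equivalently, `I ≅ I ⊗ K`): there is an isomorphism
of Hilbert modules `l₂(I) ≅ I`, given by a sequence of isometries of `I` with
orthogonal ranges whose joint range is dense. -/
def IdealStable (I : TwoSidedIdeal A) : Prop :=
  ∃ t : ℕ → A → A,
    (∀ n, ∀ x ∈ I, t n x ∈ I) ∧
    (∀ n, ∀ x ∈ I, ∀ y ∈ I, t n (x + y) = t n x + t n y) ∧
    (∀ n a, ∀ x ∈ I, t n (x * a) = t n x * a) ∧
    (∀ m n, ∀ x ∈ I, ∀ y ∈ I,
      star (t m x) * t n y = if m = n then star x * y else 0) ∧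
    (∀ x ∈ I, ∀ ε : ℝ, 0 < ε → ∃ (N : ℕ) (y : ℕ → A), (∀ i, y i ∈ I) ∧
      ‖x - ∑ i ∈ Finset.range N, t i (y i)‖ < ε)

/-- `A ≅ A ⊕ I` as right Hilbert `A`-modules: there is a unitary `x ↦ (f x, g x)`. -/
def SummandIso (I : TwoSidedIdeal A) : Prop :=
  ∃ f g : A → A, (∀ x, g x ∈ I) ∧
    (∀ x y, f (x + y) = f x + f y) ∧ (∀ x y, g (x + y) = g x + g y) ∧
    (∀ x a, f (x * a) = f x * a) ∧ (∀ x a, g (x * a) = g x * a) ∧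
    (∀ x y, star x * y = star (f x) * f y + star (g x) * g y) ∧
    (∀ a : A, ∀ i ∈ I, ∃ x, f x = a ∧ g x = i)

/-- An isomorphism of Hilbert `A`-submodules `S ≅ T` of `A`. -/
def SetHIso (S T : Set A) : Prop :=
  ∃ f : A → A, Set.BijOn f S T ∧
    (∀ x ∈ S, ∀ y ∈ S, f (x + y) = f x + f y) ∧
    (∀ x ∈ S, ∀ a : A, f (x * a) = f x * a) ∧
    (∀ (c : ℂ), ∀ x ∈ S, f (c • x) = c • f x) ∧
    (∀ x ∈ S, ∀ y ∈ S, star (f x) * f y = star x * y)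

/-- A projection in a C*-algebra. -/
def IsProjection (p : MA) : Prop := p * p = p ∧ star p = p

/-- Murray–von Neumann equivalence of projections. -/
def MvN (p q : MA) : Prop := ∃ v : MA, star v * v = p ∧ v * star v = q

/-- The restriction of the multiplier `p` to the invariant submodule `I` is
Murray–von Neumann equivalent, in `M(I) = B(I)`, to the unit of `M(I)`:
there is an adjointable `v : I → I` with `v* v = p|_I` and `v v* = 1`. -/
def RestrictEquivOne (MM : MultAlgebraOf A MA) (I : TwoSidedIdeal A) (p : MA) : Prop :=
  ∃ v w : A → A,
    (∀ x ∈ I, v x ∈ I) ∧ (∀ x ∈ I, w x ∈ I) ∧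
    (∀ x ∈ I, ∀ y ∈ I, star (v x) * y = star x * w y) ∧
    (∀ x ∈ I, MM.ι (w (v x)) = p * MM.ι x) ∧
    (∀ x ∈ I, v (w x) = x)

/-- The conditions (ii) of Lemma `piprojections`: `p` is a projection of `M(A)` with
`p · A ⊆ I` whose restriction to `I` is equivalent to the unit of `M(I)`. -/
def PIProjection (MM : MultAlgebraOf A MA) (I : TwoSidedIdeal A) (p : MA) : Prop :=
  IsProjection p ∧ (∀ a : A, ∃ j ∈ I, p * MM.ι a = MM.ι j) ∧
    RestrictEquivOne MM I p

end

/-! A projection `p ∈ M(A)` satisfying (ii) comes with a partial isometry `T : A → I` with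
adjoint `T' : I → A`, `T' T = p` and `T T' = 1_I`. Such a `T` restricts to a unitary
`pA ≅ I`; conversely, a unitary `pA ≅ I` composed with `p` is such a partial isometry,
and `pA ⊆ I` because a closed ideal is hereditary (`x* x ∈ I` forces `x ∈ I`). Given two
of them, `T₂' T₁` is a multiplier of `A` implementing `p₁ ∼ p₂`. -/

variable {A MA : Type} [NonUnitalCStarAlgebra A] [CStarAlgebra MA]

lemma eq_of_forall_star_mul_eq {x y : A} (h : ∀ c, star c * x = star c * y) : x = y := by
  rw [← sub_eq_zero, ← CStarRing.star_mul_self_eq_zero_iff, mul_sub, h, sub_self]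

lemma eq_of_forall_mul_eq {x y : A} (h : ∀ b, x * b = y * b) : x = y :=
  star_injective <| eq_of_forall_star_mul_eq fun c => by
    rw [← star_star c, ← star_mul, ← star_mul, star_star, h]

lemma eq_of_star_mul_eq_star_mul {u u' : A} (h : star u * u = star u * u')
    (h' : star u' * u' = star u' * u) : u = u' := by
  rw [← sub_eq_zero, ← CStarRing.star_mul_self_eq_zero_iff, star_sub, sub_mul, mul_sub, mul_sub,
    h, h', sub_self, sub_self, sub_self]

lemma star_sub_mul_cfcₙ_mul_sub (x : A) {ψ : ℝ → ℝ} (hψ : Continuous ψ) (hψ0 : ψ 0 = 0) :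
    star (x - x * cfcₙ ψ (star x * x)) * (x - x * cfcₙ ψ (star x * x)) =
      cfcₙ (fun t => t * (1 - ψ t) ^ 2) (star x * x) := by
  set a := star x * x
  set u := cfcₙ ψ a
  have expand : star (x - x * u) * (x - x * u) = a - a * u - u * a + u * (a * u) := by
    simp only [star_sub, star_mul, (cfcₙ_predicate ψ a).star_eq, sub_mul, mul_sub, a, u]
    noncomm_ring
  have hψc : ContinuousOn ψ (quasispectrum ℝ a) := hψ.continuousOn
  have hid : ContinuousOn (fun t : ℝ => t) (quasispectrum ℝ a) := continuousOn_id
  calc star (x - x * u) * (x - x * u)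
      = cfcₙ (fun t => t) a - cfcₙ (fun t => t) a * u - u * cfcₙ (fun t => t) a
          + u * (cfcₙ (fun t => t) a * u) := by rw [expand, cfcₙ_id' ℝ a]
    _ = cfcₙ (fun t => t - t * ψ t - ψ t * t + ψ t * (t * ψ t)) a := by
      rw [cfcₙ_add _ _ a (by fun_prop) (by simp) (by fun_prop) (by simp [hψ0]),
        cfcₙ_sub _ _ a (by fun_prop) (by simp) (by fun_prop) (by simp [hψ0]),
        cfcₙ_sub _ _ a hid rfl (by fun_prop) (by simp [hψ0]),
        cfcₙ_mul _ _ a hid rfl hψc hψ0, cfcₙ_mul _ _ a hψc hψ0 hid rfl,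
        cfcₙ_mul _ _ a hψc hψ0 (by fun_prop) (by simp [hψ0]),
        cfcₙ_mul _ _ a hid rfl hψc hψ0]
    _ = cfcₙ (fun t => t * (1 - ψ t) ^ 2) a := cfcₙ_congr fun t _ => by ring

lemma abs_mul_one_sub_div_sq_add_sq_le {r : ℝ} (hr : 0 < r) (t : ℝ) :
    |t * (1 - t ^ 2 / (t ^ 2 + r ^ 2)) ^ 2| ≤ r := by
  have hden : 0 < t ^ 2 + r ^ 2 := by positivity
  have hq : 1 - t ^ 2 / (t ^ 2 + r ^ 2) = r ^ 2 / (t ^ 2 + r ^ 2) := by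
    field_simp; ring
  have hq0 : 0 ≤ r ^ 2 / (t ^ 2 + r ^ 2) := by positivity
  have hq1 : r ^ 2 / (t ^ 2 + r ^ 2) ≤ 1 := (div_le_one hden).mpr (by nlinarith)
  have htq : |t| * (r ^ 2 / (t ^ 2 + r ^ 2)) ≤ r := by
    rw [mul_div_assoc', div_le_iff₀ hden]
    nlinarith [mul_nonneg hr.le (sq_nonneg (|t| - r)), sq_abs t, abs_nonneg t]
  rw [hq, abs_mul, abs_pow, abs_of_nonneg hq0]
  calc |t| * (r ^ 2 / (t ^ 2 + r ^ 2)) ^ 2 ≤ |t| * (r ^ 2 / (t ^ 2 + r ^ 2)) := by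
        gcongr; exact pow_le_of_le_one hq0 hq1 two_ne_zero
    _ ≤ r := htq

theorem TwoSidedIdeal.mem_of_star_mul_self_mem {I : TwoSidedIdeal A} (hI : IsClosed (I : Set A))
    {x : A} (hx : star x * x ∈ I) : x ∈ I := by
  rw [← SetLike.mem_coe, ← hI.closure_eq, Metric.mem_closure_iff]
  intro ε hε
  set a := star x * x
  set r := ε ^ 2 / 2
  have hr : 0 < r := by positivity
  have hden : ∀ t : ℝ, t ^ 2 + r ^ 2 ≠ 0 := fun t => by positivity
  set ψ : ℝ → ℝ := fun t => t ^ 2 / (t ^ 2 + r ^ 2)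
  have hψ : Continuous ψ := by fun_prop (disch := exact hden _)
  have hmem : x * cfcₙ ψ a ∈ I := by
    have hg : Continuous fun t : ℝ => t / (t ^ 2 + r ^ 2) := by fun_prop (disch := exact hden _)
    have : cfcₙ ψ a = a * cfcₙ (fun t => t / (t ^ 2 + r ^ 2)) a := by
      calc cfcₙ ψ a = cfcₙ (fun t => t * (t / (t ^ 2 + r ^ 2))) a :=
            cfcₙ_congr fun t _ => by simp only [ψ]; ring
        _ = a * cfcₙ (fun t => t / (t ^ 2 + r ^ 2)) a := by
          rw [cfcₙ_mul (fun t => t) _ a continuousOn_id rfl hg.continuousOn (by simp),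
            cfcₙ_id' ℝ a]
    rw [this]
    exact I.mul_mem_left x _ (I.mul_mem_right a _ hx)
  have hsq : ‖x - x * cfcₙ ψ a‖ ^ 2 ≤ r := by
    rw [sq, ← CStarRing.norm_star_mul_self, star_sub_mul_cfcₙ_mul_sub x hψ (by simp [ψ])]
    exact norm_cfcₙ_le fun t _ => abs_mul_one_sub_div_sq_add_sq_le hr t
  refine ⟨x * cfcₙ ψ a, hmem, ?_⟩
  rw [dist_eq_norm, ← pow_lt_pow_iff_left₀ (norm_nonneg _) hε.le two_ne_zero]
  exact hsq.trans_lt (by simp only [r]; linarith [pow_pos hε 2])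

def PreservesInnerOn (S : Set A) (f : A → A) : Prop :=
  ∀ x ∈ S, ∀ y ∈ S, star (f x) * f y = star x * y

namespace PreservesInnerOn

variable {S : Set A} {f : A → A}

lemma map_add (hf : PreservesInnerOn S f) {x y : A} (hx : x ∈ S) (hy : y ∈ S)
    (hxy : x + y ∈ S) : f (x + y) = f x + f y := by
  apply eq_of_star_mul_eq_star_mul
  · rw [mul_add, hf _ hxy _ hxy, hf _ hxy _ hx, hf _ hxy _ hy, mul_add]
  · rw [star_add, add_mul, add_mul, mul_add, mul_add, hf _ hx _ hx, hf _ hx _ hy, hf _ hy _ hx,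
      hf _ hy _ hy, hf _ hx _ hxy, hf _ hy _ hxy, mul_add, mul_add]

lemma map_mul (hf : PreservesInnerOn S f) {x : A} (hx : x ∈ S) (a : A) (hxa : x * a ∈ S) :
    f (x * a) = f x * a := by
  apply eq_of_star_mul_eq_star_mul
  · rw [hf _ hxa _ hxa, ← mul_assoc (star (f (x * a))), hf _ hxa _ hx, mul_assoc]
  · simp only [star_mul, mul_assoc]
    rw [← mul_assoc (star (f x)) (f x) a, hf _ hx _ hx, hf _ hx _ hxa, mul_assoc]

lemma map_smul (hf : PreservesInnerOn S f) (c : ℂ) {x : A} (hx : x ∈ S) (hcx : c • x ∈ S) :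
    f (c • x) = c • f x := by
  apply eq_of_star_mul_eq_star_mul
  · rw [hf _ hcx _ hcx, mul_smul_comm c (star (f (c • x))), hf _ hcx _ hx, mul_smul_comm]
  · rw [star_smul, smul_mul_assoc, smul_mul_assoc, mul_smul_comm, hf _ hx _ hx, hf _ hx _ hcx,
      mul_smul_comm]

end PreservesInnerOn

namespace MultAlgebraOf

variable (MM : MultAlgebraOf A MA)

lemma eq_of_mul_ι_eq {m m' : MA} (h : ∀ a, m * MM.ι a = m' * MM.ι a) : m = m' :=
  sub_eq_zero.mp <| MM.essential _ fun a => by rw [sub_mul, h, sub_self]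

lemma star_mul_eq_of_mul_ι {p : MA} (hp : star p = p) {a b z : A}
    (hb : MM.ι b = p * MM.ι a) (hz : p * MM.ι z = MM.ι z) : star b * z = star a * z :=
  MM.ι_inj <| by rw [MM.ι_mul, MM.ι_mul, MM.ι_star, MM.ι_star, hb, star_mul, hp, mul_assoc, hz]

/-- Adjointability alone makes `L` and `L'` right `A`-linear, so `(L, a ↦ (L' a*)*)` is a
double centralizer. -/
lemma exists_of_adjoint (L L' : A → A) (h : ∀ c b, star (L' c) * b = star c * L b) :
    ∃ m : MA, (∀ a, m * MM.ι a = MM.ι (L a)) ∧ ∀ a, star m * MM.ι a = MM.ι (L' a) := by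
  have hL : ∀ a b, L (a * b) = L a * b := fun a b => eq_of_forall_star_mul_eq fun c => by
    rw [← h, ← mul_assoc, h, mul_assoc]
  have hL' : ∀ c a, L' (c * a) = L' c * a := fun c a => star_injective <|
    eq_of_forall_mul_eq fun b => by rw [h, star_mul, mul_assoc, ← h, star_mul, mul_assoc]
  obtain ⟨m, hm, hm'⟩ := MM.represents L (fun a => star (L' (star a))) hL
    (fun a b => by simp only [star_mul, hL', star_mul, star_star])
    (fun a b => by rw [← MM.ι_mul, ← MM.ι_mul, h, star_star])
  refine ⟨m, hm, fun a => ?_⟩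
  have := congrArg star (hm' (star a))
  rwa [star_mul, ← MM.ι_star, star_star, ← MM.ι_star, star_star] at this

end MultAlgebraOf

/-- `T : A → I` is a partial isometry with adjoint `T' : I → A`, initial projection `p` and
final projection `1 ∈ M(I)`. -/
structure IsPartialIsometryOnto (MM : MultAlgebraOf A MA) (I : TwoSidedIdeal A) (p : MA)
    (T T' : A → A) : Prop where
  mem : ∀ a, T a ∈ I
  adjoint : ∀ a, ∀ y ∈ I, star (T a) * y = star a * T' y
  symm_comp : ∀ a, MM.ι (T' (T a)) = p * MM.ι a
  comp_symm : ∀ y ∈ I, T (T' y) = y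

namespace IsPartialIsometryOnto

variable {MM : MultAlgebraOf A MA} {I : TwoSidedIdeal A} {p : MA} {T T' : A → A}

lemma star_symm_mul (h : IsPartialIsometryOnto MM I p T T') {y : A} (hy : y ∈ I) (a : A) :
    star (T' y) * a = star y * T a := by
  rw [← star_star a, ← star_mul, ← h.adjoint _ _ hy, star_mul, star_star, star_star]

lemma mul_symm (h : IsPartialIsometryOnto MM I p T T') {y : A} (hy : y ∈ I) :
    p * MM.ι (T' y) = MM.ι (T' y) := by
  rw [← h.symm_comp, h.comp_symm y hy]

lemma mvN {q : MA} {U U' : A → A} (h : IsPartialIsometryOnto MM I p T T')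
    (h' : IsPartialIsometryOnto MM I q U U') : MvN p q := by
  obtain ⟨V, hV, hV'⟩ := MM.exists_of_adjoint (U' ∘ T) (T' ∘ U) fun c b => by
    rw [Function.comp_apply, h.star_symm_mul (h'.mem c), h'.adjoint _ _ (h.mem b),
      Function.comp_apply]
  refine ⟨V, MM.eq_of_mul_ι_eq fun a => ?_, MM.eq_of_mul_ι_eq fun a => ?_⟩
  · rw [mul_assoc, hV, hV', Function.comp_apply, Function.comp_apply,
      h'.comp_symm _ (h.mem a), h.symm_comp]
  · rw [mul_assoc, hV', hV, Function.comp_apply, Function.comp_apply,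
      h.comp_symm _ (h'.mem a), h'.symm_comp]

lemma restrictEquivOne (h : IsPartialIsometryOnto MM I p T T')
    (hpI : ∀ a : A, ∃ j ∈ I, p * MM.ι a = MM.ι j) : RestrictEquivOne MM I p := by
  refine ⟨T, T', fun x _ => h.mem x, fun y hy => ?_, fun x _ => h.adjoint x,
    fun x _ => h.symm_comp x, h.comp_symm⟩
  obtain ⟨j, hj, hpj⟩ := hpI (T' y)
  rwa [MM.ι_inj ((h.mul_symm hy).symm.trans hpj)]

lemma setHIso (h : IsPartialIsometryOnto MM I p T T') :
    SetHIso {a : A | p * MM.ι a = MM.ι a} (I : Set A) := by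
  set S := {a : A | p * MM.ι a = MM.ι a}
  have hS : ∀ x ∈ S, T' (T x) = x := fun x hx => MM.ι_inj (by rw [h.symm_comp]; exact hx)
  have hT : PreservesInnerOn S T := fun x _ y hy => by rw [h.adjoint x _ (h.mem y), hS y hy]
  have hadd : ∀ x ∈ S, ∀ y ∈ S, x + y ∈ S := fun x hx y hy =>
    show p * MM.ι (x + y) = _ by rw [MM.ι_add, mul_add, hx.out, hy.out]
  have hmul : ∀ x ∈ S, ∀ a, x * a ∈ S := fun x hx a =>
    show p * MM.ι (x * a) = _ by rw [MM.ι_mul, ← mul_assoc, hx.out]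
  have hsmul : ∀ (c : ℂ), ∀ x ∈ S, c • x ∈ S := fun c x hx =>
    show p * MM.ι (c • x) = _ by rw [MM.ι_smulC, mul_smul_comm, hx.out]
  refine ⟨T, ⟨fun x _ => h.mem x, fun x hx y hy hxy => ?_, fun y hy => ?_⟩,
    fun x hx y hy => hT.map_add hx hy (hadd x hx y hy),
    fun x hx a => hT.map_mul hx a (hmul x hx a),
    fun c x hx => hT.map_smul c hx (hsmul c x hx), hT⟩
  · rw [← hS x hx, ← hS y hy, hxy]
  · exact ⟨T' y, h.mul_symm hy, h.comp_symm y hy⟩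

end IsPartialIsometryOnto

section

variable {MM : MultAlgebraOf A MA} {I : TwoSidedIdeal A} {p : MA}

lemma PIProjection.exists_isPartialIsometryOnto (h : PIProjection MM I p) :
    ∃ T T' : A → A, IsPartialIsometryOnto MM I p T T' := by
  obtain ⟨⟨hpp, hps⟩, hpI, v, w, hv, hw, adj, hwv, hvw⟩ := h
  choose j hjI hj using hpI
  have hpw : ∀ y ∈ I, p * MM.ι (w y) = MM.ι (w y) := fun y hy => by
    rw [← hwv _ (hw y hy), hvw y hy]
  have hjw : ∀ y ∈ I, j (w y) = w y := fun y hy => MM.ι_inj (by rw [← hj, hpw y hy])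
  refine ⟨v ∘ j, w, ⟨fun a => hv _ (hjI a), fun a y hy => ?_, fun a => ?_, fun y hy => ?_⟩⟩
  · rw [Function.comp_apply, adj _ (hjI a) y hy,
      MM.star_mul_eq_of_mul_ι hps (hj a).symm (hpw y hy)]
  · rw [Function.comp_apply, hwv _ (hjI a), ← hj, ← mul_assoc, hpp]
  · rw [Function.comp_apply, hjw y hy, hvw y hy]

lemma PIProjection.of_setHIso (hI : IsClosed (I : Set A)) (hp : IsProjection p)
    (hiso : SetHIso {a : A | p * MM.ι a = MM.ι a} (I : Set A)) : PIProjection MM I p := by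
  set S := {a : A | p * MM.ι a = MM.ι a}
  obtain ⟨f, hbij, -, -, -, hf⟩ := hiso
  choose P hP using MM.ideal_l p
  have hPS : ∀ a, P a ∈ S := fun a => show p * MM.ι (P a) = _ by rw [← hP, ← mul_assoc, hp.1]
  have hPfix : ∀ x ∈ S, P x = x := fun x hx => MM.ι_inj (by rw [← hP]; exact hx)
  have hSI : ∀ x ∈ S, x ∈ I := fun x hx => I.mem_of_star_mul_self_mem hI <| by
    rw [← hf x hx x hx]
    exact I.mul_mem_left _ _ (hbij.mapsTo hx)
  have hpI : ∀ a, ∃ j ∈ I, p * MM.ι a = MM.ι j := fun a => ⟨P a, hSI _ (hPS a), hP a⟩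
  have hinv := hbij.invOn_invFunOn
  have hg := hbij.surjOn.mapsTo_invFunOn
  set g := Function.invFunOn f S
  have hT : IsPartialIsometryOnto MM I p (f ∘ P) g := by
    refine ⟨fun a => hbij.mapsTo (hPS a), fun a y hy => ?_, fun a => ?_, fun y hy => ?_⟩
    · rw [Function.comp_apply, ← hinv.2 hy, hf _ (hPS a) _ (hg hy), hinv.2 hy,
        MM.star_mul_eq_of_mul_ι hp.2 (hP a).symm (hg hy)]
    · rw [Function.comp_apply, hinv.1 (hPS a), hP]
    · rw [Function.comp_apply, hPfix _ (hg hy), hinv.2 hy]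
  exact ⟨hp, hpI, hT.restrictEquivOne hpI⟩

end

theorem summand_iff_PIProjection_general
    {A MA : Type} [NonUnitalCStarAlgebra A] [CStarAlgebra MA]
    (I : TwoSidedIdeal A) (hI : IsClosed (I : Set A))
    (MM : MultAlgebraOf A MA) :
    ((∃ p : MA, IsProjection p ∧
        SetHIso {a : A | p * MM.ι a = MM.ι a} (I : Set A)) ↔
      (∃ p : MA, PIProjection MM I p)) ∧
    (∀ p₁ p₂ : MA, PIProjection MM I p₁ → PIProjection MM I p₂ → MvN p₁ p₂) := by
  refine ⟨⟨fun ⟨p, hp, hiso⟩ => ⟨p, .of_setHIso hI hp hiso⟩, fun ⟨p, hp⟩ => ?_⟩,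
    fun p₁ p₂ h₁ h₂ => ?_⟩
  · obtain ⟨T, T', hT⟩ := hp.exists_isPartialIsometryOnto
    exact ⟨p, hp.1, hT.setHIso⟩
  · obtain ⟨T₁, T₁', hT₁⟩ := h₁.exists_isPartialIsometryOnto
    obtain ⟨T₂, T₂', hT₂⟩ := h₂.exists_isPartialIsometryOnto
    exact hT₁.mvN hT₂

/-- For a σ-unital C*-algebra `A` and a σ-unital closed two-sided
ideal `I`, the following are equivalent: (i) `I` is a direct summand of `A` as a right
Hilbert `A`-module (i.e. some projection `p ∈ M(A)` has `pA ≅ I`); (ii) there is a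
projection `P_I ∈ M(A)` with `P_I · A ⊆ I` whose restriction to `I` is Murray–von
Neumann equivalent to the unit of `M(I)`.  Moreover any two projections satisfying
(ii) are Murray–von Neumann equivalent in `M(A)`. -/
theorem summand_iff_PIProjection
    {A MA : Type} [NonUnitalCStarAlgebra A] [CStarAlgebra MA]
    (hA : SigmaUnitalAlg A)
    (I : TwoSidedIdeal A) (hI : IsClosed (I : Set A)) (hσ : SigmaUnitalIdeal I)
    (MM : MultAlgebraOf A MA) :
    ((∃ p : MA, IsProjection p ∧
        SetHIso {a : A | p * MM.ι a = MM.ι a} (I : Set A)) ↔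
      (∃ p : MA, PIProjection MM I p)) ∧
    (∀ p₁ p₂ : MA, PIProjection MM I p₁ → PIProjection MM I p₂ → MvN p₁ p₂) :=
  summand_iff_PIProjection_general I hI MM
end
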